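/- arXiv:1507.08007 — 5 statements merged into one kernel-verified Lean document; each statement's English description precedes it below -/
import Mathlib

section
/- Let W be an m×m real matrix with nonnegative entries such that W^t → 0 as t → ∞ (entrywise), and let α ∈ ℝ^m be a row vector. Suppose x^{(0)}, x^{(1)}, x^{(2)}, … is a sequence of row vectors in ℝ^m satisfying the componentwise inequality x^{(t+1)} ≥ α + x^{(t)} W for every t ≥ 0. Then I − W is invertible and for every t ≥ 1 the componentwise inequality x^{(t)} ≥ x^{(0)} W^t + α (I − W)^{−1} (I − W^t) holds. -/
/-!
Since `W ^ t → 0`, a row vector fixed by `W` is fixed by every `W ^ t` and hence is zero, so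
`1 - W` is injective and therefore invertible, with `(1 - W)⁻¹ (1 - W ^ t) = ∑_{k<t} W ^ k`.
Because `W` is entrywise nonnegative, `v ↦ v W` is monotone, so unrolling the recursive
inequality `t` times gives `x t ≥ x 0 W ^ t + α ∑_{k<t} W ^ k`.
-/

open Filter Topology Finset

theorem geom_sum_succ_eq_one_add_mul {R : Type*} [Semiring R] (x : R) (t : ℕ) :
    ∑ k ∈ range (t + 1), x ^ k = 1 + (∑ k ∈ range t, x ^ k) * x := by
  simp only [sum_mul, ← pow_succ, sum_range_succ', pow_zero, add_comm]

namespace Matrix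

variable {n : Type*} [Fintype n] [DecidableEq n]

theorem isUnit_one_sub_of_tendsto_pow_zero {K : Type*} [Field K] [TopologicalSpace K]
    [IsTopologicalRing K] [T2Space K] {W : Matrix n n K}
    (hW : Tendsto (fun t : ℕ => W ^ t) atTop (𝓝 0)) : IsUnit (1 - W) := by
  refine vecMul_injective_iff_isUnit.1 <| (injective_iff_map_eq_zero (vecMulLinear (1 - W))).2
    fun d hd => ?_
  have hfix : d ᵥ* W = d := by
    simpa [vecMulLinear, vecMul_sub, sub_eq_zero, eq_comm] using hd
  have hpow : ∀ t : ℕ, d ᵥ* W ^ t = d := fun t => by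
    induction t with
    | zero => simp
    | succ t ih => rw [pow_succ, ← vecMul_vecMul, ih, hfix]
  have hlim : Tendsto (fun t : ℕ => d ᵥ* W ^ t) atTop (𝓝 (d ᵥ* 0)) :=
    ((continuous_const.matrix_vecMul continuous_id).tendsto 0).comp hW
  simp only [hpow, vecMul_zero] at hlim
  exact tendsto_nhds_unique tendsto_const_nhds hlim

theorem inv_one_sub_mul_one_sub_pow {R : Type*} [CommRing R] {W : Matrix n n R}
    (hW : IsUnit (1 - W)) (t : ℕ) : (1 - W)⁻¹ * (1 - W ^ t) = ∑ k ∈ range t, W ^ k := by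
  rw [← mul_neg_geom_sum]
  exact nonsing_inv_mul_cancel_left _ _ ((isUnit_iff_isUnit_det _).1 hW)

variable {R : Type*} [Semiring R] [PartialOrder R] [IsOrderedRing R]

omit [DecidableEq n] in
theorem vecMul_mono_of_nonneg {W : Matrix n n R} (hW : ∀ i j, 0 ≤ W i j) {u v : n → R}
    (huv : u ≤ v) : u ᵥ* W ≤ v ᵥ* W := fun j =>
  sum_le_sum fun i _ => mul_le_mul_of_nonneg_right (huv i) (hW i j)

theorem vecMul_pow_add_vecMul_geom_sum_le {W : Matrix n n R} (hW : ∀ i j, 0 ≤ W i j)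
    {α : n → R} {x : ℕ → n → R} (hrec : ∀ t, α + x t ᵥ* W ≤ x (t + 1)) (t : ℕ) :
    x 0 ᵥ* W ^ t + α ᵥ* ∑ k ∈ range t, W ^ k ≤ x t := by
  induction t with
  | zero => simp
  | succ t ih =>
    calc x 0 ᵥ* W ^ (t + 1) + α ᵥ* ∑ k ∈ range (t + 1), W ^ k
        = α + (x 0 ᵥ* W ^ t + α ᵥ* ∑ k ∈ range t, W ^ k) ᵥ* W := by
          rw [geom_sum_succ_eq_one_add_mul, pow_succ, vecMul_add, vecMul_one, add_vecMul,
            vecMul_vecMul, vecMul_vecMul]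
          abel
      _ ≤ α + x t ᵥ* W := add_le_add_right (vecMul_mono_of_nonneg hW ih) α
      _ ≤ x (t + 1) := hrec t

end Matrix

/-- Let `W` be an `m × m` nonnegative real matrix with `W^t → 0` entrywise,
`α` a row vector, and `x` a sequence of row vectors with `x (t+1) ≥ α + x t * W`
componentwise. Then `I - W` is invertible and, for every `t ≥ 1`,
`x t ≥ x 0 * W^t + α * (I - W)⁻¹ * (I - W^t)` componentwise. -/
theorem stmt_3 (m : ℕ) (W : Matrix (Fin m) (Fin m) ℝ)
    (hWnonneg : ∀ i j, 0 ≤ W i j)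
    (hWlim : Filter.Tendsto (fun t : ℕ => W ^ t) Filter.atTop (nhds 0))
    (α : Fin m → ℝ) (x : ℕ → Fin m → ℝ)
    (hrec : ∀ t, ∀ j, α j + Matrix.vecMul (x t) W j ≤ x (t + 1) j) :
    IsUnit (1 - W) ∧
      ∀ t, 1 ≤ t → ∀ j,
        Matrix.vecMul (x 0) (W ^ t) j
          + Matrix.vecMul α ((1 - W)⁻¹ * (1 - W ^ t)) j ≤ x t j := by
  have hunit := Matrix.isUnit_one_sub_of_tendsto_pow_zero hWlim
  refine ⟨hunit, fun t _ => ?_⟩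
  rw [Matrix.inv_one_sub_mul_one_sub_pow hunit]
  exact Matrix.vecMul_pow_add_vecMul_geom_sum_le hWnonneg hrec t
end

section
/- Let A = (α_{ij}) be a monotone (m+1)×m matrix with entries in [0,1] satisfying α_{i,j+1} ≤ α_{ij} for all 0 ≤ i ≤ m, 1 ≤ j ≤ m−1, and α_{i1} ≤ 1 for all i. With the convention α_{i0} := 1, define the (m+1)×(m+1) matrix T by t_{ij} = α_{ij} − α_{i,j+1} for 0 ≤ j ≤ m−1 and t_{im} = α_{im} (indices 0 ≤ i ≤ m), and let L be the (m+1)×(m+1) matrix with ℓ_{ij} = 1 if i ≥ j and ℓ_{ij} = 0 otherwise (indices 0 ≤ i, j ≤ m). Let W be the m×m matrix with w_{ij} = α_{ij} − α_{i−1,j} and let α₀ = (α_{01}, …, α_{0m}). Let p = (p_0, …, p_m) be a nonnegative vector with Σ_{i=0}^m p_i = 1, and let x^{(0)}, x^{(1)}, … be a sequence of row vectors in ℝ^m with x^{(0)}_j = Σ_{k=j}^m p_k for j = 1, …, m and x^{(t+1)} ≥ α₀ + x^{(t)} W componentwise for all t ≥ 0. Then for every t ≥ 0 and every j = 1, …,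 m, x^{(t)}_j ≥ (p T^t L)_j, where (p T^t L)_j denotes the coordinate of index j of the row vector p T^t L. -/
/-!
The tail sums of `p Tᵗ` obey the recursion that bounds `x`, with equality. Indeed the tail sums of
row `i` of `T` telescope to `α i j`, so the tail sum of `q (t+1)` at `j` is `∑ i, q t i * α i j`,
and Abel summation turns this into `α 0 j + ∑ i ≥ 1, (α i j - α (i-1) j) * (tail sum of q t at i)`,
the total mass being `1`. Monotonicity of `α` makes the coefficients nonnegative, so the bound
`tail ≤ x` propagates by induction on `t`.
-/

open Finset

theorem sum_Icc_eq_of_eq_sub_succ {M : Type*} [AddCommGroup M] {f g : ℕ → M} {m : ℕ}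
    (hg : ∀ k < m, g k = f k - f (k + 1)) (hgm : g m = f m) {j : ℕ} (hj : j ≤ m) :
    ∑ k ∈ Icc j m, g k = f j := by
  have htele := sum_Ico_sub (fun k => -f k) hj
  simp only [neg_sub_neg] at htele
  rw [← Ico_add_one_right_eq_Icc, sum_Ico_succ_top hj,
    sum_congr rfl fun k hk => hg k (mem_Ico.1 hk).2, htele, hgm]
  abel

theorem sum_Icc_one_sub_pred {M : Type*} [AddCommGroup M] (f : ℕ → M) (n : ℕ) :
    ∑ i ∈ Icc 1 n, (f i - f (i - 1)) = f n - f 0 := by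
  induction n with
  | zero => simp
  | succ n ih =>
    rw [sum_Icc_succ_top (by omega), ih, Nat.add_sub_cancel]
    abel

theorem sum_range_mul_by_parts_Icc {R : Type*} [CommRing R] (f g : ℕ → R) (n : ℕ) :
    ∑ i ∈ range (n + 1), g i * f i =
      f 0 * ∑ i ∈ range (n + 1), g i +
        ∑ i ∈ Icc 1 n, (f i - f (i - 1)) * ∑ k ∈ Icc i n, g k := by
  induction n with
  | zero => simp [mul_comm]
  | succ n ih =>
    have hsplit : ∀ i ∈ Icc 1 n, (f i - f (i - 1)) * ∑ k ∈ Icc i (n + 1), g k =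
        (f i - f (i - 1)) * ∑ k ∈ Icc i n, g k + (f i - f (i - 1)) * g (n + 1) := fun i hi => by
      rw [sum_Icc_succ_top (by grind), mul_add]
    rw [sum_range_succ _ (n + 1), ih, sum_Icc_succ_top (by omega), sum_congr rfl hsplit,
      sum_add_distrib, ← sum_mul, sum_Icc_one_sub_pred, sum_range_succ g (n + 1),
      Nat.add_sub_cancel, Icc_self, sum_singleton]
    ring

theorem sum_Icc_eq_sum_mul_sum_Icc {R : Type*} [CommSemiring R] {m : ℕ} {q q' : ℕ → R}
    {T : ℕ → ℕ → R} (hq' : ∀ k ≤ m, q' k = ∑ i ∈ range (m + 1), q i * T i k) (j : ℕ) :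
    ∑ k ∈ Icc j m, q' k = ∑ i ∈ range (m + 1), q i * ∑ k ∈ Icc j m, T i k := by
  rw [sum_congr rfl fun k hk => hq' k (mem_Icc.1 hk).2, sum_comm]
  simp only [mul_sum]

theorem stmt_5_general (m : ℕ) (α : ℕ → ℕ → ℝ)
    (hα0 : ∀ i, i ≤ m → α i 0 = 1)
    (hmono : ∀ i j, 1 ≤ i → i ≤ m → 1 ≤ j → j ≤ m → α (i - 1) j ≤ α i j)
    (T : ℕ → ℕ → ℝ)
    (hT : ∀ i j, i ≤ m → j < m → T i j = α i j - α i (j + 1))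
    (hTm : ∀ i, i ≤ m → T i m = α i m)
    (p : ℕ → ℝ)
    (hpsum : ∑ i ∈ Finset.range (m + 1), p i = 1)
    (q : ℕ → ℕ → ℝ)
    (hq0 : ∀ i, i ≤ m → q 0 i = p i)
    (hq : ∀ t, ∀ j, j ≤ m → q (t + 1) j = ∑ i ∈ Finset.range (m + 1), q t i * T i j)
    (x : ℕ → ℕ → ℝ)
    (hx0 : ∀ j, 1 ≤ j → j ≤ m → x 0 j = ∑ k ∈ Finset.Icc j m, p k)
    (hx : ∀ t, ∀ j, 1 ≤ j → j ≤ m →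
      α 0 j + ∑ i ∈ Finset.Icc 1 m, (α i j - α (i - 1) j) * x t i ≤ x (t + 1) j) :
    ∀ t, ∀ j, 1 ≤ j → j ≤ m → ∑ k ∈ Finset.Icc j m, q t k ≤ x t j := by
  have htail : ∀ t, ∀ j ≤ m, ∑ k ∈ Icc j m, q (t + 1) k = ∑ i ∈ range (m + 1), q t i * α i j := by
    intro t j hj
    rw [sum_Icc_eq_sum_mul_sum_Icc (hq t) j]
    refine sum_congr rfl fun i hi => ?_
    have hi : i ≤ m := mem_range_succ_iff.1 hi
    rw [sum_Icc_eq_of_eq_sub_succ (hT i · hi) (hTm i hi) hj]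
  have hmass : ∀ t, ∑ i ∈ range (m + 1), q t i = 1 := by
    intro t
    induction t with
    | zero => rw [← hpsum]; exact sum_congr rfl fun i hi => hq0 i (mem_range_succ_iff.1 hi)
    | succ t ih =>
      rw [range_eq_Ico, Ico_add_one_right_eq_Icc, htail t 0 m.zero_le, ← ih]
      exact sum_congr rfl fun i hi => by rw [hα0 i (mem_range_succ_iff.1 hi), mul_one]
  intro t
  induction t with
  | zero =>
    intro j hj1 hjm
    rw [hx0 j hj1 hjm]
    exact (sum_congr rfl fun k hk => hq0 k (mem_Icc.1 hk).2).le
  | succ t ih =>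
    intro j hj1 hjm
    calc ∑ k ∈ Icc j m, q (t + 1) k = ∑ i ∈ range (m + 1), q t i * α i j := htail t j hjm
      _ = α 0 j + ∑ i ∈ Icc 1 m, (α i j - α (i - 1) j) * ∑ k ∈ Icc i m, q t k := by
        rw [sum_range_mul_by_parts_Icc, hmass t, mul_one]
      _ ≤ α 0 j + ∑ i ∈ Icc 1 m, (α i j - α (i - 1) j) * x t i := by
        gcongr with i hi
        · exact sub_nonneg.2 (hmono i j (mem_Icc.1 hi).1 (mem_Icc.1 hi).2 hj1 hjm)
        · exact ih i (mem_Icc.1 hi).1 (mem_Icc.1 hi).2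
      _ ≤ x (t + 1) j := hx t j hj1 hjm

/-- Theorem 2 of the paper: lower bound on the expected proportions of fit
individuals via the Markov chain associated to the monotone matrix of lower bounds `α`.

`α` is a monotone `(m+1) × m` matrix with entries in `[0,1]`, nonincreasing in `j`, with the
convention `α i 0 = 1`. `T` is the `(m+1) × (m+1)` transition matrix `t i j = α i j - α i (j+1)`
for `j < m`, `t i m = α i m`. `q t` is the distribution `p Tᵗ` of the associated Markov chain
started from `p`. `x` satisfies `x 0 j = ∑_{k=j}^m p k` and the componentwise recursion
`x (t+1) j ≥ α 0 j + ∑_{i=1}^m (α i j - α (i-1) j) x t i`. The conclusion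
`x t j ≥ ∑_{k=j}^m q t k` is exactly `x t j ≥ (p Tᵗ L)_j` for the lower-triangular matrix
`L` of ones. -/
theorem stmt_5 (m : ℕ) (hm : 1 ≤ m) (α : ℕ → ℕ → ℝ)
    (hα0 : ∀ i, i ≤ m → α i 0 = 1)
    (hrange : ∀ i j, i ≤ m → 1 ≤ j → j ≤ m → α i j ∈ Set.Icc (0 : ℝ) 1)
    (hmono : ∀ i j, 1 ≤ i → i ≤ m → 1 ≤ j → j ≤ m → α (i - 1) j ≤ α i j)
    (hdec : ∀ i j, i ≤ m → 1 ≤ j → j ≤ m - 1 → α i (j + 1) ≤ α i j)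
    (T : ℕ → ℕ → ℝ)
    (hT : ∀ i j, i ≤ m → j < m → T i j = α i j - α i (j + 1))
    (hTm : ∀ i, i ≤ m → T i m = α i m)
    (p : ℕ → ℝ) (hp : ∀ i, i ≤ m → 0 ≤ p i)
    (hpsum : ∑ i ∈ Finset.range (m + 1), p i = 1)
    (q : ℕ → ℕ → ℝ)
    (hq0 : ∀ i, i ≤ m → q 0 i = p i)
    (hq : ∀ t, ∀ j, j ≤ m → q (t + 1) j = ∑ i ∈ Finset.range (m + 1), q t i * T i j)
    (x : ℕ → ℕ → ℝ)
    (hx0 : ∀ j, 1 ≤ j → j ≤ m → x 0 j = ∑ k ∈ Finset.Icc j m, p k)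
    (hx : ∀ t, ∀ j, 1 ≤ j → j ≤ m →
      α 0 j + ∑ i ∈ Finset.Icc 1 m, (α i j - α (i - 1) j) * x t i ≤ x (t + 1) j) :
    ∀ t, ∀ j, 1 ≤ j → j ≤ m → ∑ k ∈ Finset.Icc j m, q t k ≤ x t j :=
  stmt_5_general m α hα0 hmono T hT hTm p hpsum q hq0 hq x hx0 hx
end

section
/- Let n ≥ 1 be an integer and q a real number with 1/(n+1) ≤ q ≤ 1. Define the (n+1)×n matrix Γ = (γ_{ij}) (rows indexed 0 ≤ i ≤ n, columns 1 ≤ j ≤ n) by: γ_{ij} = 1 for 1 ≤ i ≤ n and 1 ≤ j ≤ i−1; γ_{i,i+1} = (1−q)(n−i)/n for 0 ≤ i ≤ n−1; γ_{ii} = q + (1−q)(n−i)/n for 1 ≤ i ≤ n−1; γ_{nn} = q; and γ_{ij} = 0 for 0 ≤ i ≤ n−2 and i+2 ≤ j ≤ n. Then Γ is monotone, i.e. γ_{i−1,j} ≤ γ_{ij} for all 1 ≤ i ≤ n and 1 ≤ j ≤ n. -/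
/-! With `p = (1 - q) / n`, row `i` of `Γ` is `1, …, 1, q + (n - i) p, (n - i) p, 0, …, 0`, so
passing from row `i - 1` to row `i` shifts this profile one column to the right. Entrywise
comparison then reduces to `(n - i) p ≤ 1 - q` (column `i - 1`), to `p ≤ q` (column `i`, where
row `i - 1` carries `(n - i + 1) p`), and to `0 ≤ (n - i) p` (column `i + 1`); the middle one is
equivalent to `q ≥ 1 / (n + 1)`. -/

lemma one_sub_div_le_of_inv_add_one_le {n q : ℝ} (hn : 0 < n) (hq : 1 / (n + 1) ≤ q) :
    (1 - q) / n ≤ q := by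
  rw [div_le_iff₀ (by linarith)] at hq
  rw [div_le_iff₀ hn]
  linarith

lemma mul_sub_div_le_self {a n k : ℝ} (ha : 0 ≤ a) (hn : 0 < n) (hk : 0 ≤ k) :
    a * (n - k) / n ≤ a := by
  rw [mul_div_assoc]
  exact mul_le_of_le_one_right ha (div_le_one_of_le₀ (by linarith) hn.le)

lemma mul_sub_div_nonneg {a n k : ℝ} (ha : 0 ≤ a) (hn : 0 ≤ n) (hk : k ≤ n) :
    0 ≤ a * (n - k) / n :=
  div_nonneg (mul_nonneg ha (sub_nonneg.2 hk)) hn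

theorem stmt_9_general (n : ℕ) (q : ℝ)
    (hq1 : 1 / ((n : ℝ) + 1) ≤ q) (hq2 : q ≤ 1)
    (γ : ℕ → ℕ → ℝ)
    (h1 : ∀ i j, 1 ≤ i → i ≤ n → 1 ≤ j → j ≤ i - 1 → γ i j = 1)
    (h2 : ∀ i, i ≤ n - 1 → γ i (i + 1) = (1 - q) * ((n : ℝ) - (i : ℝ)) / n)
    (h3 : ∀ i, 1 ≤ i → i ≤ n - 1 → γ i i = q + (1 - q) * ((n : ℝ) - (i : ℝ)) / n)
    (h4 : γ n n = q)
    (h5 : ∀ i j, i + 2 ≤ j → j ≤ n → γ i j = 0) :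
    ∀ i j, 1 ≤ i → i ≤ n → 1 ≤ j → j ≤ n → γ (i - 1) j ≤ γ i j := by
  intro i j hi hin hj hjn
  have hn : (0 : ℝ) < n := by exact_mod_cast hi.trans hin
  have hq : 0 ≤ 1 - q := sub_nonneg.2 hq2
  have diag : ∀ k, 1 ≤ k → k ≤ n → γ k k = q + (1 - q) * ((n : ℝ) - k) / n := by
    intro k hk hkn
    rcases hkn.lt_or_eq with hkn | rfl
    · exact h3 k hk (by omega)
    · simp [h4]
  have superdiag : ∀ k, 1 ≤ k → k ≤ n →
      γ (k - 1) k = (1 - q) / n + (1 - q) * ((n : ℝ) - k) / n := by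
    intro k hk hkn
    have := h2 (k - 1) (by omega)
    rw [Nat.sub_add_cancel hk, Nat.cast_sub hk] at this
    rw [this]
    ring
  obtain h | rfl | rfl | rfl | h :
      j + 2 ≤ i ∨ i = j + 1 ∨ j = i ∨ j = i + 1 ∨ i + 2 ≤ j := by omega
  · rw [h1 (i - 1) j (by omega) (by omega) hj (by omega), h1 i j hi hin hj (by omega)]
  · rw [Nat.add_sub_cancel, diag j hj hjn, h1 (j + 1) j hi hin hj (by omega)]
    linarith [mul_sub_div_le_self (k := (j : ℝ)) hq hn j.cast_nonneg]
  · rw [superdiag j hj hjn, diag j hj hjn]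
    linarith [one_sub_div_le_of_inv_add_one_le hn hq1]
  · rw [h5 (i - 1) (i + 1) (by omega) hjn, h2 i (by omega)]
    exact mul_sub_div_nonneg hq hn.le (by exact_mod_cast hin)
  · rw [h5 (i - 1) j (by omega) hjn, h5 i j (by omega) hjn]

/-- the matrix of cumulative transition probabilities of the point mutation
operator with parameter `q ∈ [1/(n+1), 1]` on the OneMax function (with levels
`φ_i = i`, `i = 0, …, n`) is monotone. -/
theorem stmt_9 (n : ℕ) (hn : 1 ≤ n) (q : ℝ)
    (hq1 : 1 / ((n : ℝ) + 1) ≤ q) (hq2 : q ≤ 1)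
    (γ : ℕ → ℕ → ℝ)
    (h1 : ∀ i j, 1 ≤ i → i ≤ n → 1 ≤ j → j ≤ i - 1 → γ i j = 1)
    (h2 : ∀ i, i ≤ n - 1 → γ i (i + 1) = (1 - q) * ((n : ℝ) - (i : ℝ)) / n)
    (h3 : ∀ i, 1 ≤ i → i ≤ n - 1 → γ i i = q + (1 - q) * ((n : ℝ) - (i : ℝ)) / n)
    (h4 : γ n n = q)
    (h5 : ∀ i j, i + 2 ≤ j → j ≤ n → γ i j = 0) :
    ∀ i j, 1 ≤ i → i ≤ n → 1 ≤ j → j ≤ n → γ (i - 1) j ≤ γ i j :=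
  stmt_9_general n q hq1 hq2 γ h1 h2 h3 h4 h5
end

section
/- Let m ≥ 1 be an integer and let r, r̃ be real numbers with 0 ≤ r̃ ≤ r ≤ 1. For integers i with 0 ≤ i ≤ m and l, define Q(i, l) = Σ_{ν=0}^{min{i, i−l}} C(i, ν) (1 − r)^ν r^{i−ν} if l ≤ i, and Q(i, l) = 0 if l > i (so Q(i,l) = 1 when l ≤ 0). Define the (m+1)×m matrix Γ = (γ_{ij}) by γ_{ij} = Σ_{k=0}^{m−i} C(m−i, k) r̃^k (1 − r̃)^{m−i−k} Q(i, j − k) for 0 ≤ i ≤ m and 1 ≤ j ≤ m. Then Γ is monotone, i.e. γ_{i−1,j} ≤ γ_{ij} for all 1 ≤ i ≤ m and 1 ≤ j ≤ m. -/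
/-!
Write `binomialSum n p q g = ∑ C(n,k) p^k q^(n-k) g k`, the expectation of `g (Bin(n, p))` when
`q = 1 - p`. Then `Q i l` is the tail `P(Bin(i, r) ≥ l)` and `γ i j = E[Q i (j - Bin(m - i, r̃))]`.
Pascal's rule splits off one trial: in `γ (i-1) j` the extra block lacks `K` and helps with
probability `r̃`, in `γ i j` it has `K` and helps with probability `r`, so with `A ≥ B` the two
conditional tails, `γ i j - γ (i-1) j = (r - r̃) (A - B) ≥ 0`.
-/

open Finset

section BinomialSum

variable {R : Type*}

def binomialSum [CommSemiring R] (n : ℕ) (p q : R) (g : ℕ → R) : R :=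
  ∑ k ∈ range (n + 1), n.choose k * p ^ k * q ^ (n - k) * g k

variable [CommSemiring R] {n : ℕ} {p q : R} {g g' : ℕ → R}

theorem binomialSum_congr (h : ∀ k ≤ n, g k = g' k) :
    binomialSum n p q g = binomialSum n p q g' :=
  sum_congr rfl fun k hk => by rw [h k (Nat.lt_succ_iff.1 (mem_range.1 hk))]

theorem binomialSum_add :
    binomialSum n p q (fun k => g k + g' k) = binomialSum n p q g + binomialSum n p q g' := by
  simp only [binomialSum, mul_add, sum_add_distrib]

theorem binomialSum_const_mul (a : R) :
    binomialSum n p q (fun k => a * g k) = a * binomialSum n p q g := by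
  simp only [binomialSum, mul_sum]
  exact sum_congr rfl fun k _ => by ring

theorem binomialSum_succ :
    binomialSum (n + 1) p q g
      = p * binomialSum n p q (fun k => g (k + 1)) + q * binomialSum n p q g := by
  have hq : q * binomialSum n p q g
      = ∑ k ∈ range (n + 2), n.choose k * p ^ k * q ^ (n + 1 - k) * g k := by
    rw [sum_range_succ, Nat.choose_succ_self, binomialSum, mul_sum]
    simp only [Nat.cast_zero, zero_mul, add_zero]
    refine sum_congr rfl fun k hk => ?_
    rw [Nat.sub_add_comm (Nat.lt_succ_iff.1 (mem_range.1 hk)), pow_succ]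
    ring
  rw [hq, binomialSum, binomialSum, mul_sum, sum_range_succ' _ (n + 1),
    sum_range_succ' (fun k => (n.choose k : R) * p ^ k * q ^ (n + 1 - k) * g k)]
  simp only [Nat.choose_succ_succ', Nat.cast_add, Nat.choose_zero_right, add_mul, sum_add_distrib,
    Nat.add_sub_add_right]
  rw [add_assoc]
  congr 1
  exact sum_congr rfl fun k _ => by ring

theorem binomialSum_mono [PartialOrder R] [IsOrderedRing R] (hp : 0 ≤ p) (hq : 0 ≤ q)
    (h : ∀ k ≤ n, g k ≤ g' k) : binomialSum n p q g ≤ binomialSum n p q g' :=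
  sum_le_sum fun k hk =>
    mul_le_mul_of_nonneg_left (h k (Nat.lt_succ_iff.1 (mem_range.1 hk))) (by positivity)

end BinomialSum

section BinomialTail

-- `ν` counts the blocks that lose the property, so this is `P(Bin(i, r) ≥ l)`.
noncomputable def binomialTail (r : ℝ) (i l : ℕ) : ℝ :=
  binomialSum i (1 - r) r fun ν => if ν + l ≤ i then 1 else 0

variable {r : ℝ}

theorem binomialTail_antitone (hr0 : 0 ≤ r) (hr1 : r ≤ 1) (i : ℕ) :
    Antitone (binomialTail r i) := fun l l' hll =>
  binomialSum_mono (sub_nonneg.2 hr1) hr0 fun ν _ => by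
    split_ifs <;> first | omega | norm_num

theorem binomialTail_succ (i l : ℕ) :
    binomialTail r (i + 1) l = r * binomialTail r i (l - 1) + (1 - r) * binomialTail r i l := by
  rw [binomialTail, binomialSum_succ, add_comm]
  congr 2
  -- for `l = 0` the truncated `l - 1` is harmless, since only `ν ≤ i` is summed over
  · exact binomialSum_congr fun ν hν => by
      simp only [show ν + l ≤ i + 1 ↔ ν + (l - 1) ≤ i by omega]
  · exact binomialSum_congr fun ν _ => by
      simp only [show ν + 1 + l ≤ i + 1 ↔ ν + l ≤ i by omega]

theorem binomialTail_eq_sum {i l : ℕ} (h : l ≤ i) :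
    binomialTail r i l
      = ∑ ν ∈ range (min i (i - l) + 1), (i.choose ν : ℝ) * (1 - r) ^ ν * r ^ (i - ν) := by
  rw [min_eq_right (Nat.sub_le i l), binomialTail, binomialSum]
  simp only [mul_ite, mul_one, mul_zero]
  rw [← sum_filter]
  congr 1
  ext ν
  simp only [mem_filter, mem_range]
  omega

theorem binomialTail_of_lt {i l : ℕ} (h : i < l) : binomialTail r i l = 0 := by
  rw [binomialTail, binomialSum]
  exact sum_eq_zero fun ν _ => by simp only [if_neg (show ¬ν + l ≤ i by omega), mul_zero]

end BinomialTail

theorem binomialSum_binomialTail_le_succ {s r : ℝ} (hs : 0 ≤ s) (hsr : s ≤ r) (hr1 : r ≤ 1)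
    (n i j : ℕ) :
    binomialSum (n + 1) s (1 - s) (fun k => binomialTail r i (j - k))
      ≤ binomialSum n s (1 - s) (fun k => binomialTail r (i + 1) (j - k)) := by
  set A := binomialSum n s (1 - s) fun k => binomialTail r i (j - (k + 1))
  set B := binomialSum n s (1 - s) fun k => binomialTail r i (j - k)
  have hBA : B ≤ A := binomialSum_mono hs (by linarith) fun k _ =>
    binomialTail_antitone (hs.trans hsr) hr1 i (by omega)
  have hlow : binomialSum (n + 1) s (1 - s) (fun k => binomialTail r i (j - k))
      = s * A + (1 - s) * B :=
    binomialSum_succ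
  have hhigh : binomialSum n s (1 - s) (fun k => binomialTail r (i + 1) (j - k))
      = r * A + (1 - r) * B := by
    simp only [binomialTail_succ, Nat.sub_sub]
    rw [binomialSum_add, binomialSum_const_mul, binomialSum_const_mul]
  rw [hlow, hhigh]
  nlinarith [mul_nonneg (sub_nonneg.2 hsr) (sub_nonneg.2 hBA)]

theorem stmt_10_general (m : ℕ) (r rt : ℝ)
    (hrt0 : 0 ≤ rt) (hrtr : rt ≤ r) (hr1 : r ≤ 1)
    (Q : ℕ → ℕ → ℝ)
    (hQ1 : ∀ i l, l ≤ i →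
      Q i l = ∑ ν ∈ Finset.range (min i (i - l) + 1),
        (Nat.choose i ν : ℝ) * (1 - r) ^ ν * r ^ (i - ν))
    (hQ2 : ∀ i l, i < l → Q i l = 0)
    (γ : ℕ → ℕ → ℝ)
    (hγ : ∀ i j, i ≤ m → 1 ≤ j → j ≤ m →
      γ i j = ∑ k ∈ Finset.range (m - i + 1),
        (Nat.choose (m - i) k : ℝ) * rt ^ k * (1 - rt) ^ (m - i - k) * Q i (j - k)) :
    ∀ i j, 1 ≤ i → i ≤ m → 1 ≤ j → j ≤ m → γ (i - 1) j ≤ γ i j := by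
  have hQ : Q = binomialTail r := funext fun i => funext fun l => by
    rcases le_or_gt l i with h | h
    · rw [hQ1 i l h, binomialTail_eq_sum h]
    · rw [hQ2 i l h, binomialTail_of_lt h]
  subst hQ
  intro i j hi him hj hjm
  obtain ⟨i, rfl⟩ : ∃ i', i = i' + 1 := ⟨i - 1, by omega⟩
  rw [Nat.add_sub_cancel, hγ i j (by omega) hj hjm, hγ (i + 1) j him hj hjm,
    show m - i = m - (i + 1) + 1 by omega]
  exact binomialSum_binomialTail_le_succ hrt0 hrtr hr1 _ i j

/-- monotonicity of the cumulative transition matrix of a block-wise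
mutation operator. Each of `m` blocks lacking a property acquires it with probability
`r̃` and each block possessing it keeps it with probability `r`; if `r ≥ r̃` then the
matrix `γ i j = ∑_{k=0}^{m-i} C(m-i,k) r̃^k (1-r̃)^{m-i-k} Q(i, j-k)` is monotone, where
`Q(i,l) = ∑_{ν=0}^{min(i,i-l)} C(i,ν) (1-r)^ν r^{i-ν}` for `l ≤ i` and `Q(i,l) = 0` for
`l > i` (the index `j - k` is truncated natural subtraction, so `Q(i, j-k) = 1` whenever
`k ≥ j`, matching `Q(i,l) = 1` for `l ≤ 0`). -/
theorem stmt_10 (m : ℕ) (hm : 1 ≤ m) (r rt : ℝ)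
    (hrt0 : 0 ≤ rt) (hrtr : rt ≤ r) (hr1 : r ≤ 1)
    (Q : ℕ → ℕ → ℝ)
    (hQ1 : ∀ i l, l ≤ i →
      Q i l = ∑ ν ∈ Finset.range (min i (i - l) + 1),
        (Nat.choose i ν : ℝ) * (1 - r) ^ ν * r ^ (i - ν))
    (hQ2 : ∀ i l, i < l → Q i l = 0)
    (γ : ℕ → ℕ → ℝ)
    (hγ : ∀ i j, i ≤ m → 1 ≤ j → j ≤ m →
      γ i j = ∑ k ∈ Finset.range (m - i + 1),
        (Nat.choose (m - i) k : ℝ) * rt ^ k * (1 - rt) ^ (m - i - k) * Q i (j - k)) :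
    ∀ i j, 1 ≤ i → i ≤ m → 1 ≤ j → j ≤ m → γ (i - 1) j ≤ γ i j :=
  stmt_10_general m r rt hrt0 hrtr hr1 Q hQ1 hQ2 γ hγ
end

section
/- Let n ≥ 2 and ℓ ≥ 2 be integers and set m = ℓ − 1. Suppose x^{(0)}, x^{(1)}, x^{(2)}, … is a sequence of vectors in ℝ^m such that x^{(0)}_j ≥ 0 for all j = 1, …, m and for every t ≥ 0: x^{(t+1)}_1 ≥ 1/n + (1 − 1/n) x^{(t)}_1, and x^{(t+1)}_j ≥ (1/n) x^{(t)}_{j−1} + (1 − 1/n) x^{(t)}_j for 2 ≤ j ≤ m. Then for every t ≥ 0, x^{(t)}_m ≥ 1 − √(ℓ−1) · (1 − (2(n−1)/n²)(1 − cos(π/ℓ)))^{t/2}. -/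
/-! With `a = 1 - 1/n`, `b = 1/n`, the errors `y t = 𝟙 - x t` satisfy `y (t + 1) ≤ W (y t)`
coordinatewise, where `W = a I + b N` and `N` is the shift `v ↦ (0, v₁, …, v_{m-1})`; as `W ≥ 0`
and `y 0 ≤ 𝟙`, we get `y t ≤ W ^ t 𝟙`. The quadratic form `⟪v, N v⟫` is at most
`cos (π / ℓ) ‖v‖²`, by weighted AM–GM with weights the positive eigenvector `(sin (j π / ℓ))_j`
of the path `1 — ⋯ — m`. Hence `‖W v‖² ≤ ρ ‖v‖²` with `ρ = a² + b² + 2ab cos (π / ℓ)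
= 1 - 2ab (1 - cos (π / ℓ))`, and `y t m ≤ ‖W ^ t 𝟙‖ ≤ √m ρ ^ (t / 2)`. -/

open Real Finset

lemma mul_le_div_mul_sq_add_div_mul_sq {p q : ℝ} (hp : 0 < p) (hq : 0 < q) (u v : ℝ) :
    u * v ≤ q / (2 * p) * u ^ 2 + p / (2 * q) * v ^ 2 := by
  have key : q / (2 * p) * u ^ 2 + p / (2 * q) * v ^ 2 - u * v
      = (q * u - p * v) ^ 2 / (2 * p * q) := by
    field_simp
    ring
  have : 0 ≤ (q * u - p * v) ^ 2 / (2 * p * q) := by positivity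
  linarith

lemma sum_range_eq_sum_range_succ_sub {M : Type*} [AddCommGroup M] {f : ℕ → M} (hf : f 0 = 0)
    (m : ℕ) : ∑ i ∈ range m, f i = ∑ i ∈ range m, f (i + 1) - f m := by
  rw [eq_sub_iff_add_eq, ← sum_range_succ, sum_range_succ', hf, add_zero]

lemma sum_mul_succ_le_of_pos_eigenvector {m : ℕ} {c : ℝ} {s w : ℕ → ℝ}
    (hs_pos : ∀ i, 1 ≤ i → i ≤ m → 0 < s i) (hs_zero : s 0 = 0) (hs_end : s (m + 1) = 0)
    (hs_eigen : ∀ i, s i + s (i + 2) = 2 * c * s (i + 1)) (hw : w 0 = 0) :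
    ∑ i ∈ range m, w i * w (i + 1) ≤ c * ∑ i ∈ range m, w (i + 1) ^ 2 := by
  have amgm : ∀ i ∈ range m, w i * w (i + 1)
      ≤ s (i + 1) / (2 * s i) * w i ^ 2 + s i / (2 * s (i + 1)) * w (i + 1) ^ 2 := by
    intro i hi
    rw [mem_range] at hi
    rcases Nat.eq_zero_or_pos i with rfl | hi0
    -- both weights are `0` here (`s 0 = 0` and `x / 0 = 0`), harmless since `w 0 = 0`
    · simp [hw, hs_zero]
    · exact mul_le_div_mul_sq_add_div_mul_sq (hs_pos i hi0 hi.le)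
        (hs_pos (i + 1) (by omega) hi) _ _
  have shift : ∑ i ∈ range m, s (i + 1) / (2 * s i) * w i ^ 2
      = ∑ i ∈ range m, s (i + 2) / (2 * s (i + 1)) * w (i + 1) ^ 2 := by
    rw [sum_range_eq_sum_range_succ_sub (by simp [hw]), hs_end]
    simp
  calc ∑ i ∈ range m, w i * w (i + 1)
      ≤ ∑ i ∈ range m,
          (s (i + 1) / (2 * s i) * w i ^ 2 + s i / (2 * s (i + 1)) * w (i + 1) ^ 2) :=
        sum_le_sum amgm
    _ = ∑ i ∈ range m, (s i + s (i + 2)) / (2 * s (i + 1)) * w (i + 1) ^ 2 := by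
        rw [sum_add_distrib, shift, ← sum_add_distrib]
        refine sum_congr rfl fun i _ => ?_
        ring
    _ = c * ∑ i ∈ range m, w (i + 1) ^ 2 := by
        rw [mul_sum]
        refine sum_congr rfl fun i hi => ?_
        have : s (i + 1) ≠ 0 := (hs_pos (i + 1) (by omega) (by simpa using hi)).ne'
        rw [hs_eigen]
        field_simp

lemma sum_mul_succ_le_cos_mul_sum_sq (m : ℕ) {w : ℕ → ℝ} (hw : w 0 = 0) :
    ∑ i ∈ range m, w i * w (i + 1) ≤ cos (π / (m + 1)) * ∑ i ∈ range m, w (i + 1) ^ 2 := by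
  set θ := π / (m + 1)
  have hθ : (m + 1) * θ = π := by
    simp only [θ]
    field_simp
  refine sum_mul_succ_le_of_pos_eigenvector (s := fun i => sin (i * θ)) ?_ (by simp)
    (by push_cast; rw [hθ, sin_pi]) (fun i => ?_) hw
  · intro i hi1 him
    have hi1 : (1 : ℝ) ≤ i := by exact_mod_cast hi1
    have him : (i : ℝ) < m + 1 := by exact_mod_cast Nat.lt_succ_of_le him
    apply sin_pos_of_pos_of_lt_pi
    · have : 0 < θ := by positivity
      positivity
    · calc (i : ℝ) * θ < (m + 1) * θ := by gcongr
        _ = π := hθ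
  · push_cast
    rw [show ((i : ℝ) + 2) * θ = (i + 1) * θ + θ by ring,
      show (i : ℝ) * θ = (i + 1) * θ - θ by ring, sin_add, sin_sub]
    ring

lemma sum_sq_le_sum_sq_succ (m : ℕ) {w : ℕ → ℝ} (hw : w 0 = 0) :
    ∑ i ∈ range m, w i ^ 2 ≤ ∑ i ∈ range m, w (i + 1) ^ 2 := by
  rw [sum_range_eq_sum_range_succ_sub (by simp [hw])]
  linarith [sq_nonneg (w m)]

lemma sq_add_sq_add_two_mul_mul_cos_nonneg (a b θ : ℝ) :
    0 ≤ a ^ 2 + b ^ 2 + 2 * a * b * cos θ := by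
  nlinarith [sq_nonneg (a + b * cos θ), sq_nonneg (b * sin θ), sin_sq_add_cos_sq θ]

lemma sum_sq_bidiagonal_le {a b : ℝ} (ha : 0 ≤ a) (hb : 0 ≤ b) (m : ℕ) {w : ℕ → ℝ}
    (hw : w 0 = 0) :
    ∑ i ∈ range m, (b * w i + a * w (i + 1)) ^ 2
      ≤ (a ^ 2 + b ^ 2 + 2 * a * b * cos (π / (m + 1))) * ∑ i ∈ range m, w (i + 1) ^ 2 := by
  calc ∑ i ∈ range m, (b * w i + a * w (i + 1)) ^ 2
      = b ^ 2 * ∑ i ∈ range m, w i ^ 2 + a ^ 2 * ∑ i ∈ range m, w (i + 1) ^ 2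
        + 2 * a * b * ∑ i ∈ range m, w i * w (i + 1) := by
        simp only [mul_sum, ← sum_add_distrib]
        exact sum_congr rfl fun i _ => by ring
    _ ≤ b ^ 2 * ∑ i ∈ range m, w (i + 1) ^ 2 + a ^ 2 * ∑ i ∈ range m, w (i + 1) ^ 2
        + 2 * a * b * (cos (π / (m + 1)) * ∑ i ∈ range m, w (i + 1) ^ 2) := by
        gcongr b ^ 2 * ?_ + _ + _ * ?_
        · exact sum_sq_le_sum_sq_succ m hw
        · exact sum_mul_succ_le_cos_mul_sum_sq m hw
    _ = (a ^ 2 + b ^ 2 + 2 * a * b * cos (π / (m + 1))) * ∑ i ∈ range m, w (i + 1) ^ 2 := by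
        ring

/-- `bidiagIterate a b t` is `W ^ t 𝟙`, where `W` has `a` on the diagonal and `b` below it;
coordinate `0` is a phantom coordinate pinned at `0`. -/
noncomputable def bidiagIterate (a b : ℝ) : ℕ → ℕ → ℝ
  | _, 0 => 0
  | 0, _ + 1 => 1
  | t + 1, j + 1 => b * bidiagIterate a b t j + a * bidiagIterate a b t (j + 1)

section bidiagIterate

variable {a b : ℝ}

lemma sum_sq_bidiagIterate_le (ha : 0 ≤ a) (hb : 0 ≤ b) (m t : ℕ) :
    ∑ i ∈ range m, bidiagIterate a b t (i + 1) ^ 2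
      ≤ m * (a ^ 2 + b ^ 2 + 2 * a * b * cos (π / (m + 1))) ^ t := by
  set ρ := a ^ 2 + b ^ 2 + 2 * a * b * cos (π / (m + 1))
  have hρ : 0 ≤ ρ := sq_add_sq_add_two_mul_mul_cos_nonneg a b _
  induction t with
  | zero => simp [bidiagIterate]
  | succ t ih =>
    calc ∑ i ∈ range m, bidiagIterate a b (t + 1) (i + 1) ^ 2
        = ∑ i ∈ range m, (b * bidiagIterate a b t i + a * bidiagIterate a b t (i + 1)) ^ 2 := rfl
      _ ≤ ρ * ∑ i ∈ range m, bidiagIterate a b t (i + 1) ^ 2 :=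
          sum_sq_bidiagonal_le ha hb m (bidiagIterate.eq_1 a b t)
      _ ≤ ρ * (m * ρ ^ t) := by gcongr
      _ = m * ρ ^ (t + 1) := by ring

lemma bidiagIterate_le_sqrt (ha : 0 ≤ a) (hb : 0 ≤ b) {m : ℕ} (hm : 1 ≤ m) (t : ℕ) :
    bidiagIterate a b t m
      ≤ √m * (a ^ 2 + b ^ 2 + 2 * a * b * cos (π / (m + 1))) ^ ((t : ℝ) / 2) := by
  set ρ := a ^ 2 + b ^ 2 + 2 * a * b * cos (π / (m + 1))
  have hρ : 0 ≤ ρ := sq_add_sq_add_two_mul_mul_cos_nonneg a b _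
  obtain ⟨k, rfl⟩ := Nat.exists_eq_add_of_le' hm
  have hsq : bidiagIterate a b t (k + 1) ^ 2 ≤ (k + 1 : ℕ) * ρ ^ t :=
    (single_le_sum (f := fun i => bidiagIterate a b t (i + 1) ^ 2) (fun i _ => sq_nonneg _)
      (self_mem_range_succ k)).trans (sum_sq_bidiagIterate_le ha hb (k + 1) t)
  calc bidiagIterate a b t (k + 1) ≤ √((k + 1 : ℕ) * ρ ^ t) :=
        (le_abs_self _).trans (abs_le_sqrt hsq)
    _ = √(k + 1 : ℕ) * ρ ^ ((t : ℝ) / 2) := by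
        rw [sqrt_mul' _ (pow_nonneg hρ t), sqrt_eq_rpow (ρ ^ t), ← rpow_natCast_mul hρ, mul_one_div]

lemma one_sub_le_bidiagIterate (ha : 0 ≤ a) (hb : 0 ≤ b) (hab : a + b = 1) {m : ℕ}
    {x : ℕ → ℕ → ℝ} (h0 : ∀ j, 1 ≤ j → j ≤ m → 0 ≤ x 0 j)
    (h1 : ∀ t, b + a * x t 1 ≤ x (t + 1) 1)
    (hj : ∀ t, ∀ j, 2 ≤ j → j ≤ m → b * x t (j - 1) + a * x t j ≤ x (t + 1) j) :
    ∀ t j, 1 ≤ j → j ≤ m → 1 - x t j ≤ bidiagIterate a b t j := by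
  intro t
  induction t with
  | zero =>
    rintro (_ | j) hj1 hjm
    · omega
    · simp only [bidiagIterate]
      linarith [h0 (j + 1) hj1 hjm]
  | succ t ih =>
    rintro (_ | _ | j) hj1 hjm
    · omega
    · have hdiag := mul_le_mul_of_nonneg_left (ih 1 le_rfl hjm) ha
      simp only [bidiagIterate]
      linarith [h1 t]
    · have hsub := mul_le_mul_of_nonneg_left (ih (j + 1) (by omega) (by omega)) hb
      have hdiag := mul_le_mul_of_nonneg_left (ih (j + 1 + 1) (by omega) hjm) ha
      have hstep := hj t (j + 1 + 1) (by omega) hjm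
      rw [Nat.add_sub_cancel] at hstep
      simp only [bidiagIterate]
      linarith

end bidiagIterate

/-- inequality (17) of the paper: for the Randomized Local Search bound on
`ℓ`-unimodal functions, any nonnegative sequence of vectors `x t` (components `1..m`,
`m = ℓ - 1`) satisfying `x (t+1) 1 ≥ 1/n + (1 - 1/n) x t 1` and
`x (t+1) j ≥ (1/n) x t (j-1) + (1 - 1/n) x t j` for `2 ≤ j ≤ m` satisfies
`x t m ≥ 1 - √(ℓ-1) (1 - (2(n-1)/n²)(1 - cos(π/ℓ)))^{t/2}` for every `t ≥ 0`. -/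
theorem stmt_11 (n l : ℕ) (hn : 2 ≤ n) (hl : 2 ≤ l) (m : ℕ) (hm : m = l - 1)
    (x : ℕ → ℕ → ℝ)
    (h0 : ∀ j, 1 ≤ j → j ≤ m → 0 ≤ x 0 j)
    (h1 : ∀ t, 1 / (n : ℝ) + (1 - 1 / (n : ℝ)) * x t 1 ≤ x (t + 1) 1)
    (hj : ∀ t, ∀ j, 2 ≤ j → j ≤ m →
      (1 / (n : ℝ)) * x t (j - 1) + (1 - 1 / (n : ℝ)) * x t j ≤ x (t + 1) j) :
    ∀ t : ℕ,
      1 - Real.sqrt ((l : ℝ) - 1) *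
          (1 - (2 * ((n : ℝ) - 1) / (n : ℝ) ^ 2) * (1 - Real.cos (π / (l : ℝ)))) ^ ((t : ℝ) / 2)
        ≤ x t m := by
  intro t
  have hml : (m : ℝ) + 1 = l := by rw [hm]; norm_cast; omega
  have hn' : (2 : ℝ) ≤ n := by exact_mod_cast hn
  have hb : 0 ≤ 1 / (n : ℝ) := by positivity
  have ha : 0 ≤ 1 - 1 / (n : ℝ) := by
    rw [sub_nonneg, div_le_one (by positivity)]
    linarith
  have hcmp := one_sub_le_bidiagIterate ha hb (by ring) h0 h1 hj t m (by omega) le_rfl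
  have hbound := bidiagIterate_le_sqrt ha hb (m := m) (by omega) t
  have hrate : 1 - (2 * ((n : ℝ) - 1) / (n : ℝ) ^ 2) * (1 - cos (π / (l : ℝ)))
      = (1 - 1 / (n : ℝ)) ^ 2 + (1 / (n : ℝ)) ^ 2
        + 2 * (1 - 1 / (n : ℝ)) * (1 / (n : ℝ)) * cos (π / (m + 1)) := by
    rw [hml]
    field_simp
    ring
  rw [hrate, ← hml, add_sub_cancel_right]
  linarith
end
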